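/- Let (g₁, g₂) be jointly Gaussian standard normals with E[g₁ g₂] = ρ, and let t ∈ ℝ. Then P(g₁ ≤ t, g₂ > t) + P(g₁ > t, g₂ ≤ t) ≤ C √(1 − ρ) for an absolute constant C (uniformly in t). -/

import Mathlib

open MeasureTheory

/-- density of a bivariate standard Gaussian with correlation ρ -/
noncomputable def gauss2Density (ρ : ℝ) (z : ℝ × ℝ) : ℝ :=
  (1 / (2 * Real.pi * Real.sqrt (1 - ρ ^ 2))) *
    Real.exp (-(z.1 ^ 2 - 2 * ρ * z.1 * z.2 + z.2 ^ 2) / (2 * (1 - ρ ^ 2)))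

/-- density of a standard Gaussian on ℝ -/
noncomputable def gauss1Density (x : ℝ) : ℝ :=
  (1 / Real.sqrt (2 * Real.pi)) * Real.exp (-x ^ 2 / 2)

/-! In rotated coordinates the quadratic form of the density is
`(y - x)² / (4 (1 - ρ)) + (x + y)² / (4 (1 + ρ))`. Where `t` separates `x` and `y` we have
`(x - t)² + (y - t)² ≤ (y - x)²`, so there the density is at most a constant times the
product Gaussian `exp (-((x - t)² + (y - t)²) / (4 (1 - ρ)))`, whose integral is
`2 √(1 - ρ) / √(1 + ρ)`. This is at most `2 √(1 - ρ)` for `ρ ≥ 0`, while for `ρ < 0`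
the total mass `1` already suffices. -/

open Real Set

lemma lintegral_ofReal_exp_neg_mul_sq_sub {b : ℝ} (hb : 0 < b) (m : ℝ) :
    ∫⁻ x : ℝ, ENNReal.ofReal (exp (-b * (x - m) ^ 2)) = ENNReal.ofReal √(π / b) := by
  rw [lintegral_sub_right_eq_self (fun x => ENNReal.ofReal (exp (-b * x ^ 2))) m,
    ← ofReal_integral_eq_lintegral_ofReal (integrable_exp_neg_mul_sq hb)
      (Filter.Eventually.of_forall fun x => (exp_pos _).le), integral_gaussian]

lemma lintegral_ofReal_exp_mul_exp {a b : ℝ} (ha : 0 < a) (hb : 0 < b) (m : ℝ) {f : ℝ → ℝ}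
    (hf : Measurable f) :
    ∫⁻ z : ℝ × ℝ,
        ENNReal.ofReal (exp (-a * (z.1 - m) ^ 2) * exp (-b * (z.2 - f z.1) ^ 2)) =
      ENNReal.ofReal (√(π / a) * √(π / b)) := by
  have inner (x : ℝ) :
      ∫⁻ y : ℝ, ENNReal.ofReal (exp (-a * (x - m) ^ 2) * exp (-b * (y - f x) ^ 2)) =
      ENNReal.ofReal (exp (-a * (x - m) ^ 2)) * ENNReal.ofReal √(π / b) := by
    simp_rw [ENNReal.ofReal_mul (exp_pos _).le]
    rw [lintegral_const_mul _ (by fun_prop), lintegral_ofReal_exp_neg_mul_sq_sub hb]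
  rw [Measure.volume_eq_prod, lintegral_prod _ (by fun_prop)]
  simp_rw [inner]
  rw [lintegral_mul_const _ (by fun_prop), lintegral_ofReal_exp_neg_mul_sq_sub ha,
    ENNReal.ofReal_mul (by positivity)]

lemma gauss2Density_nonneg (ρ : ℝ) (z : ℝ × ℝ) : 0 ≤ gauss2Density ρ z := by
  unfold gauss2Density; positivity

lemma continuous_gauss2Density (ρ : ℝ) : Continuous (gauss2Density ρ) := by
  unfold gauss2Density; fun_prop

/-- Outside `-1 < ρ < 1` the normalising factor is `1 / 0 = 0`. -/
lemma gauss2Density_of_one_le_sq {ρ : ℝ} (hρ : 1 ≤ ρ ^ 2) : gauss2Density ρ = 0 := by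
  ext z
  simp [gauss2Density, sqrt_eq_zero'.2 (by linarith : 1 - ρ ^ 2 ≤ 0)]

/-- `g₁` is standard normal and, given `g₁ = x`, `g₂` is normal with mean `ρ x`
and variance `1 - ρ²`. -/
lemma gauss2Density_eq_mul_exp_mul_exp {ρ : ℝ} (h1 : -1 < ρ) (h2 : ρ < 1) (z : ℝ × ℝ) :
    gauss2Density ρ z = 1 / (2 * π * √(1 - ρ ^ 2)) *
      (exp (-(1 / 2) * (z.1 - 0) ^ 2) *
        exp (-(1 / (2 * (1 - ρ ^ 2))) * (z.2 - ρ * z.1) ^ 2)) := by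
  have : 1 - ρ ^ 2 ≠ 0 := by nlinarith
  rw [gauss2Density, ← exp_add]
  congr 2
  field_simp
  ring

lemma lintegral_gauss2Density {ρ : ℝ} (h1 : -1 < ρ) (h2 : ρ < 1) :
    ∫⁻ z : ℝ × ℝ, ENNReal.ofReal (gauss2Density ρ z) = 1 := by
  have hσ : 0 < 1 - ρ ^ 2 := by nlinarith
  have hK : 0 ≤ 1 / (2 * π * √(1 - ρ ^ 2)) := by positivity
  simp_rw [gauss2Density_eq_mul_exp_mul_exp h1 h2, ENNReal.ofReal_mul hK]
  rw [lintegral_const_mul _ (by fun_prop), lintegral_ofReal_exp_mul_exp (by norm_num)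
    (by positivity) 0 (measurable_const_mul ρ), ← ENNReal.ofReal_mul (by positivity),
    ← ENNReal.ofReal_one]
  congr 1
  rw [← sqrt_mul (by positivity), show π / (1 / 2) * (π / (1 / (2 * (1 - ρ ^ 2)))) =
    (2 * π) ^ 2 * (1 - ρ ^ 2) by field_simp, sqrt_mul (by positivity), sqrt_sq (by positivity)]
  field_simp

lemma integrable_gauss2Density (ρ : ℝ) : Integrable (gauss2Density ρ) := by
  by_cases hρ : 1 ≤ ρ ^ 2
  · rw [gauss2Density_of_one_le_sq hρ]
    exact integrable_zero _ _ _
  have h1 : -1 < ρ := by nlinarith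
  have h2 : ρ < 1 := by nlinarith
  refine ⟨(continuous_gauss2Density ρ).aestronglyMeasurable, ?_⟩
  rw [hasFiniteIntegral_iff_ofReal (.of_forall (gauss2Density_nonneg ρ)),
    lintegral_gauss2Density h1 h2]
  exact ENNReal.one_lt_top

lemma integral_gauss2Density_le_one (ρ : ℝ) : ∫ z, gauss2Density ρ z ≤ 1 := by
  by_cases hρ : 1 ≤ ρ ^ 2
  · simp [gauss2Density_of_one_le_sq hρ]
  rw [integral_eq_lintegral_of_nonneg_ae (.of_forall (gauss2Density_nonneg ρ))
    (continuous_gauss2Density ρ).aestronglyMeasurable,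
    lintegral_gauss2Density (by nlinarith) (by nlinarith), ENNReal.toReal_one]

lemma gauss2Density_le_of_mul_nonpos {ρ t : ℝ} {z : ℝ × ℝ} (h1 : -1 < ρ) (h2 : ρ < 1)
    (hz : (z.1 - t) * (z.2 - t) ≤ 0) :
    gauss2Density ρ z ≤ 1 / (2 * π * √(1 - ρ ^ 2)) *
      (exp (-(1 / (4 * (1 - ρ))) * (z.1 - t) ^ 2) *
        exp (-(1 / (4 * (1 - ρ))) * (z.2 - t) ^ 2)) := by
  obtain ⟨x, y⟩ := z
  have hσ : 0 < 1 - ρ ^ 2 := by nlinarith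
  have hρ : 0 < 4 * (1 - ρ) := by linarith
  have h_sep : (x - t) ^ 2 + (y - t) ^ 2 ≤ (y - x) ^ 2 := by nlinarith
  have h_diff : (y - x) ^ 2 / (4 * (1 - ρ)) ≤
      (x ^ 2 - 2 * ρ * x * y + y ^ 2) / (2 * (1 - ρ ^ 2)) := by
    rw [div_le_div_iff₀ hρ (by positivity)]
    nlinarith [mul_nonneg (by linarith : 0 ≤ 1 - ρ) (sq_nonneg (x + y))]
  rw [gauss2Density, ← exp_add]
  gcongr
  have := div_le_div_of_nonneg_right h_sep hρ.le
  rw [neg_div]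
  linarith [show -(1 / (4 * (1 - ρ))) * (x - t) ^ 2 + -(1 / (4 * (1 - ρ))) * (y - t) ^ 2 =
    -(((x - t) ^ 2 + (y - t) ^ 2) / (4 * (1 - ρ))) by ring]

lemma setIntegral_gauss2Density_le_sqrt_div_sqrt {ρ t : ℝ} {s : Set (ℝ × ℝ)} (h1 : -1 < ρ)
    (h2 : ρ < 1) (hs : s ⊆ {z | (z.1 - t) * (z.2 - t) ≤ 0}) :
    ∫ z in s, gauss2Density ρ z ≤ 2 * √(1 - ρ) / √(1 + ρ) := by
  obtain ⟨c, hc_def⟩ : ∃ c, c = 1 / (4 * (1 - ρ)) := ⟨_, rfl⟩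
  have hc : 0 < c := by rw [hc_def]; exact div_pos one_pos (by linarith)
  have hK : 0 ≤ 1 / (2 * π * √(1 - ρ ^ 2)) := by positivity
  set bound : ℝ × ℝ → ℝ := fun z => 1 / (2 * π * √(1 - ρ ^ 2)) *
    (exp (-c * (z.1 - t) ^ 2) * exp (-c * (z.2 - t) ^ 2)) with h_bound
  have h_le : ∀ z ∈ s, gauss2Density ρ z ≤ bound z := fun z hz => by
    rw [h_bound, hc_def]; exact gauss2Density_le_of_mul_nonpos h1 h2 (hs hz)
  have h_lint : ∫⁻ z in s, ENNReal.ofReal (gauss2Density ρ z) ≤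
      ENNReal.ofReal (1 / (2 * π * √(1 - ρ ^ 2)) * (√(π / c) * √(π / c))) :=
    calc ∫⁻ z in s, ENNReal.ofReal (gauss2Density ρ z)
        ≤ ∫⁻ z in s, ENNReal.ofReal (bound z) :=
          setLIntegral_mono (by fun_prop) fun z hz => ENNReal.ofReal_le_ofReal (h_le z hz)
      _ ≤ ∫⁻ z, ENNReal.ofReal (bound z) := setLIntegral_le_lintegral _ _
      _ = _ := by
          simp_rw [h_bound, ENNReal.ofReal_mul hK]
          rw [lintegral_const_mul _ (by fun_prop),
            lintegral_ofReal_exp_mul_exp hc hc t (f := fun _ => t) measurable_const]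
  have h_val : 1 / (2 * π * √(1 - ρ ^ 2)) * (√(π / c) * √(π / c)) =
      2 * √(1 - ρ) / √(1 + ρ) := by
    have h_sub : 0 < √(1 - ρ) := sqrt_pos.2 (by linarith)
    have h_add : 0 < √(1 + ρ) := sqrt_pos.2 (by linarith)
    rw [mul_self_sqrt (by positivity), hc_def, show 1 - ρ ^ 2 = (1 - ρ) * (1 + ρ) by ring,
      sqrt_mul (by linarith)]
    field_simp
    rw [sq_sqrt (by linarith)]
    ring
  rw [integral_eq_lintegral_of_nonneg_ae (.of_forall (gauss2Density_nonneg ρ))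
    (continuous_gauss2Density ρ).aestronglyMeasurable]
  exact ENNReal.toReal_le_of_le_ofReal (by positivity) (h_val ▸ h_lint)

lemma setIntegral_gauss2Density_le (ρ : ℝ) {t : ℝ} {s : Set (ℝ × ℝ)}
    (hs : s ⊆ {z | (z.1 - t) * (z.2 - t) ≤ 0}) :
    ∫ z in s, gauss2Density ρ z ≤ 2 * √(1 - ρ) := by
  rcases lt_or_ge ρ 0 with hneg | hnonneg
  · calc ∫ z in s, gauss2Density ρ z
        ≤ ∫ z, gauss2Density ρ z :=
          setIntegral_le_integral (integrable_gauss2Density ρ)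
            (.of_forall (gauss2Density_nonneg ρ))
      _ ≤ 1 := integral_gauss2Density_le_one ρ
      _ ≤ 2 * √(1 - ρ) := by linarith [one_le_sqrt.2 (by linarith : 1 ≤ 1 - ρ)]
  rcases lt_or_ge ρ 1 with hlt | hge
  · calc ∫ z in s, gauss2Density ρ z
        ≤ 2 * √(1 - ρ) / √(1 + ρ) :=
          setIntegral_gauss2Density_le_sqrt_div_sqrt (by linarith) hlt hs
      _ ≤ 2 * √(1 - ρ) := div_le_self (by positivity) (one_le_sqrt.2 (by linarith))
  · simp [gauss2Density_of_one_le_sq (by nlinarith : 1 ≤ ρ ^ 2)]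

/-- `P(g₁ ≤ t, g₂ > t) + P(g₁ > t, g₂ ≤ t) ≤ C √(1 − ρ)`
uniformly in `t`, for an absolute constant `C`. -/
theorem sepProb_le : ∃ C : ℝ, 0 < C ∧ ∀ ρ t : ℝ, -1 ≤ ρ → ρ ≤ 1 →
    (∫ z : ℝ × ℝ, if z.1 ≤ t ∧ t < z.2 then gauss2Density ρ z else 0) +
      (∫ z : ℝ × ℝ, if t < z.1 ∧ z.2 ≤ t then gauss2Density ρ z else 0)
      ≤ C * Real.sqrt (1 - ρ) := by
  refine ⟨2, two_pos, fun ρ t _ _ => ?_⟩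
  set A := {z : ℝ × ℝ | z.1 ≤ t ∧ t < z.2}
  set B := {z : ℝ × ℝ | t < z.1 ∧ z.2 ≤ t}
  have hA : MeasurableSet A :=
    (measurableSet_le measurable_fst measurable_const).inter
      (measurableSet_lt measurable_const measurable_snd)
  have hB : MeasurableSet B :=
    (measurableSet_lt measurable_const measurable_fst).inter
      (measurableSet_le measurable_snd measurable_const)
  have hAB : Disjoint A B := disjoint_left.2 fun z hA hB => hA.1.not_gt hB.1
  have h_sep : A ∪ B ⊆ {z | (z.1 - t) * (z.2 - t) ≤ 0} := by
    rintro z (⟨h₁, h₂⟩ | ⟨h₁, h₂⟩)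
    · exact mul_nonpos_of_nonpos_of_nonneg (sub_nonpos.2 h₁) (sub_nonneg.2 h₂.le)
    · exact mul_nonpos_of_nonneg_of_nonpos (sub_nonneg.2 h₁.le) (sub_nonpos.2 h₂)
  calc
    _ = (∫ z in A, gauss2Density ρ z) + ∫ z in B, gauss2Density ρ z := by
      simp only [← integral_indicator hA, ← integral_indicator hB, indicator_apply]
      rfl
    _ = ∫ z in A ∪ B, gauss2Density ρ z :=
      (setIntegral_union hAB hB (integrable_gauss2Density ρ).integrableOn
        (integrable_gauss2Density ρ).integrableOn).symm
    _ ≤ 2 * √(1 - ρ) := setIntegral_gauss2Density_le ρ h_sep
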